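/- Let n ≥ 1 and λ ≥ 2 be integers, N ≤ λⁿ a positive integer, ν_1, …, ν_{λⁿ} ∈ ℤⁿ a complete set of representatives of ℤⁿ/λℤⁿ, and let p_1, …, p_N : ℝⁿ → ℂ be 2πℤⁿ-periodic functions with p_l(0) = 1 for all l. Define τ(ω) = λ^{−n/2}( Σ_{l=1}^{N} p_l(λω) e^{i ν_l·ω} + Σ_{l=N+1}^{λⁿ} e^{i ν_l·ω} ). Then τ(0) = λ^{n/2} and τ(γ) = 0 for every γ ∈ Γ∖{0}; that is, τ is a lowpass mask with positive accuracy. -/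

import Mathlib

open Complex Real BigOperators

noncomputable section

/-- The dot product of `k ∈ ℤⁿ` with `ω ∈ ℝⁿ`. -/
def zdot {n : ℕ} (k : Fin n → ℤ) (ω : Fin n → ℝ) : ℝ := ∑ i, (k i : ℝ) * ω i

/-- `Γ = {2πν/λ : ν ∈ {0,1,…,λ-1}ⁿ}`. -/
def GammaSet (n lam : ℕ) : Set (Fin n → ℝ) :=
  Set.range (fun ν : Fin n → Fin lam => fun i => 2 * π * (ν i : ℝ) / (lam : ℝ))

/-- `τ(ω) = λ^{-n/2} ( Σ_{l<N} p_l(λω) e^{i ν_l·ω} + Σ_{N≤l<λⁿ} e^{i ν_l·ω} )`. -/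
def tauTW (n lam N : ℕ) (p : ℕ → (Fin n → ℝ) → ℂ) (ν : ℕ → Fin n → ℤ)
    (ω : Fin n → ℝ) : ℂ :=
  (((lam : ℝ) ^ (-(n : ℝ) / 2) : ℝ) : ℂ) *
    ((∑ l ∈ Finset.range N,
        p l (fun i => (lam : ℝ) * ω i) * Complex.exp (Complex.I * ((zdot (ν l) ω : ℝ) : ℂ)))
      + ∑ l ∈ Finset.Ico N (lam ^ n), Complex.exp (Complex.I * ((zdot (ν l) ω : ℝ) : ℂ)))

def chi (lam : ℕ) (M : ℤ) : ℂ := Complex.exp (2 * π * Complex.I * M / lam)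

lemma chi_add (lam : ℕ) (a b : ℤ) : chi lam (a + b) = chi lam a * chi lam b := by
  rw [chi, chi, chi, ← Complex.exp_add]
  push_cast
  ring_nf

lemma chi_mul_self (lam : ℕ) (hlam : lam ≠ 0) (t : ℤ) : chi lam ((lam : ℤ) * t) = 1 := by
  rw [chi]
  have h0 : (lam : ℂ) ≠ 0 := by exact_mod_cast hlam
  have : (2 * ↑π * Complex.I * ((lam : ℤ) * t : ℤ) / lam : ℂ) = t * (2 * π * Complex.I) := by
    push_cast
    field_simp
  rw [this, Complex.exp_int_mul_two_pi_mul_I]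

lemma chi_congr (lam : ℕ) (hlam : lam ≠ 0) (a b : ℤ) (h : (a : ZMod lam) = (b : ZMod lam)) :
    chi lam a = chi lam b := by
  rw [ZMod.intCast_eq_intCast_iff] at h
  obtain ⟨t, ht⟩ := (Int.modEq_iff_dvd.1 h)
  have : b = a + (lam : ℤ) * t := by linarith
  rw [this, chi_add, chi_mul_self lam hlam, mul_one]

lemma chi_ne_one (lam : ℕ) (m : ℕ) (h0 : 0 < m) (h1 : m < lam) : chi lam (m : ℤ) ≠ 1 := by
  intro h
  rw [chi, Complex.exp_eq_one_iff] at h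
  obtain ⟨k, hk⟩ := h
  have hlam0 : (lam : ℂ) ≠ 0 := Nat.cast_ne_zero.2 (by omega)
  have h2 := congrArg (· * (lam:ℂ)) hk
  simp only [div_mul_cancel₀ _ hlam0] at h2
  have h3 : ((m:ℤ) : ℂ) = ((k * lam : ℤ) : ℂ) := by
    refine mul_left_cancel₀ Complex.two_pi_I_ne_zero ?_
    push_cast
    push_cast at h2
    linear_combination h2
  have h4 : (m : ℤ) = k * lam := by exact_mod_cast h3
  rcases le_or_gt 1 k with hc | hc
  · nlinarith [h4, h1, (by exact_mod_cast h1 : (m:ℤ) < lam)]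
  · have hk0 : k ≤ 0 := by omega
    nlinarith [(by exact_mod_cast h0 : (0:ℤ) < m), (by exact_mod_cast h1 : (m:ℤ) < lam)]

lemma sum_G_eq_zero (n lam : ℕ) [NeZero lam] (hlam : 2 ≤ lam) (μ : Fin n → Fin lam) (i0 : Fin n)
    (h0 : 0 < (μ i0 : ℕ)) :
    ∑ m : Fin n → ZMod lam, chi lam (∑ i, ((m i).val : ℤ) * ((μ i : ℕ) : ℤ)) = 0 := by
  set δ : Fin n → ZMod lam := Pi.single i0 1 with hδ
  set S := ∑ m : Fin n → ZMod lam, chi lam (∑ i, ((m i).val : ℤ) * ((μ i : ℕ) : ℤ)) with hS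
  set c := chi lam ((μ i0 : ℕ) : ℤ) with hc
  have key : ∀ m : Fin n → ZMod lam,
      chi lam (∑ i, (((m + δ) i).val : ℤ) * ((μ i : ℕ) : ℤ))
        = c * chi lam (∑ i, ((m i).val : ℤ) * ((μ i : ℕ) : ℤ)) := by
    intro m
    rw [hc, ← chi_add]
    apply chi_congr lam (NeZero.ne lam)
    push_cast [ZMod.natCast_val, ZMod.cast_id]
    simp only [Pi.add_apply, add_mul, Finset.sum_add_distrib, hδ]
    rw [add_comm]
    congr 1
    simp [Pi.single_apply, ite_mul]
  have hshift : (∑ m : Fin n → ZMod lam,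
      chi lam (∑ i, (((m + δ) i).val : ℤ) * ((μ i : ℕ) : ℤ))) = S :=
    Fintype.sum_bijective (· + δ) (Equiv.addRight δ).bijective _ _ (fun m => rfl)
  have hcS : S = c * S := by
    calc S = ∑ m : Fin n → ZMod lam,
          chi lam (∑ i, (((m + δ) i).val : ℤ) * ((μ i : ℕ) : ℤ)) := hshift.symm
    _ = ∑ m : Fin n → ZMod lam, c * chi lam (∑ i, ((m i).val : ℤ) * ((μ i : ℕ) : ℤ)) :=
        Finset.sum_congr rfl (fun m _ => key m)
    _ = c * S := (Finset.mul_sum _ _ _).symm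
  have hcne : c ≠ 1 := chi_ne_one lam (μ i0) h0 (μ i0).isLt
  have hz : (c - 1) * S = 0 := by linear_combination -hcS
  rcases mul_eq_zero.1 hz with h | h
  · exact absurd (sub_eq_zero.1 h) hcne
  · exact h

lemma sum_reindex (n lam : ℕ) [NeZero lam] (ν : ℕ → Fin n → ℤ)
    (hν : ∀ k : Fin n → ℤ, ∃! l : ℕ, l ∈ Finset.range (lam ^ n) ∧
      ∃ j : Fin n → ℤ, k = fun i => ν l i + (lam : ℤ) * j i)
    (μ : Fin n → Fin lam) :
    ∑ l ∈ Finset.range (lam ^ n), chi lam (∑ i, ν l i * ((μ i : ℕ) : ℤ))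
      = ∑ m : Fin n → ZMod lam, chi lam (∑ i, ((m i).val : ℤ) * ((μ i : ℕ) : ℤ)) := by
  apply Finset.sum_bij (fun l _ => (fun i => ((ν l i : ZMod lam)) : Fin n → ZMod lam))
  · intro a _; exact Finset.mem_univ _
  · intro a ha b hb hab
    obtain ⟨l0, _, huniq⟩ := hν (ν b)
    have hdvd : ∀ i, (lam : ℤ) ∣ ν b i - ν a i := by
      intro i
      have := congrFun hab i
      exact (ZMod.intCast_eq_intCast_iff _ _ _).1 this |>.dvd
    have ha' : a = l0 := by
      apply huniq
      refine ⟨ha, fun i => (ν b i - ν a i) / lam, funext fun i => ?_⟩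
      have := Int.ediv_mul_cancel (hdvd i)
      push_cast
      nlinarith [Int.ediv_mul_cancel (hdvd i)]
    have hb' : b = l0 := huniq b ⟨hb, 0, by simp⟩
    rw [ha', hb']
  · intro b _
    obtain ⟨l, ⟨hl, j, hkj⟩, _⟩ := hν (fun i => ((b i).val : ℤ))
    refine ⟨l, hl, funext fun i => ?_⟩
    have := congrFun hkj i
    have h2 : (((b i).val : ℤ) : ZMod lam) = ((ν l i : ℤ) : ZMod lam) := by
      rw [this]; push_cast; simp
    rw [← h2]
    push_cast [ZMod.natCast_val, ZMod.cast_id]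
    rfl
  · intro l _
    apply chi_congr lam (NeZero.ne lam)
    push_cast [ZMod.natCast_val, ZMod.cast_id]
    rfl

theorem tau_lowpass_accuracy (n lam N : ℕ) (hn : 1 ≤ n) (hlam : 2 ≤ lam) (hN : 1 ≤ N)
    (hNlam : N ≤ lam ^ n)
    (ν : ℕ → Fin n → ℤ)
    (hν : ∀ k : Fin n → ℤ, ∃! l : ℕ, l ∈ Finset.range (lam ^ n) ∧
      ∃ j : Fin n → ℤ, k = fun i => ν l i + (lam : ℤ) * j i)
    (p : ℕ → (Fin n → ℝ) → ℂ)
    (hper : ∀ l < N, ∀ ω : Fin n → ℝ, ∀ k : Fin n → ℤ,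
      p l (fun i => ω i + 2 * π * (k i : ℝ)) = p l ω)
    (hp0 : ∀ l < N, p l 0 = 1) :
    tauTW n lam N p ν 0 = (((lam : ℝ) ^ ((n : ℝ) / 2) : ℝ) : ℂ) ∧
    ∀ γ ∈ GammaSet n lam, γ ≠ 0 → tauTW n lam N p ν γ = 0 := by
  haveI : NeZero lam := ⟨by omega⟩
  have hlamR : (lam : ℝ) ≠ 0 := Nat.cast_ne_zero.2 (by omega)
  have hlamRpos : (0 : ℝ) < lam := by positivity
  constructor
  · -- τ(0) = λ^{n/2}
    rw [tauTW]
    have hz : ∀ l : ℕ, Complex.I * ((zdot (ν l) 0 : ℝ) : ℂ) = 0 := by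
      intro l; simp [zdot]
    have hzero : (fun i : Fin n => (lam : ℝ) * (0 : Fin n → ℝ) i) = (0 : Fin n → ℝ) := by
      funext i; simp
    have h1 : (∑ l ∈ Finset.range N,
        p l (fun i => (lam : ℝ) * (0 : Fin n → ℝ) i) *
          Complex.exp (Complex.I * ((zdot (ν l) 0 : ℝ) : ℂ))) = (N : ℂ) := by
      rw [Finset.sum_congr rfl (fun l hl => ?_), Finset.sum_const, Finset.card_range,
        nsmul_eq_mul, mul_one]
      rw [hz l, Complex.exp_zero, mul_one, hzero, hp0 l (Finset.mem_range.1 hl)]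
    have h2 : (∑ l ∈ Finset.Ico N (lam ^ n),
        Complex.exp (Complex.I * ((zdot (ν l) 0 : ℝ) : ℂ))) = ((lam ^ n - N : ℕ) : ℂ) := by
      rw [Finset.sum_congr rfl (fun l _ => by rw [hz l, Complex.exp_zero]),
        Finset.sum_const, Nat.card_Ico, nsmul_eq_mul, mul_one]
    rw [h1, h2]
    have h3 : ((N : ℂ) + ((lam ^ n - N : ℕ) : ℂ)) = ((lam ^ n : ℕ) : ℂ) := by
      rw [← Nat.cast_add]
      congr 1
      omega
    rw [h3]
    rw [show ((lam ^ n : ℕ) : ℂ) = (((lam ^ n : ℕ) : ℝ) : ℂ) by push_cast; ring,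
      ← Complex.ofReal_mul]
    congr 1
    have : ((lam ^ n : ℕ) : ℝ) = (lam : ℝ) ^ ((n : ℕ) : ℝ) := by
      rw [Real.rpow_natCast]; push_cast; ring
    rw [this, ← Real.rpow_add hlamRpos]
    congr 1
    ring
  · -- vanishing on Γ \ {0}
    rintro γ ⟨μ, rfl⟩ hγne
    -- find a coordinate where μ is nonzero
    have hex : ∃ i0 : Fin n, 0 < ((μ i0 : ℕ)) := by
      by_contra hco
      push_neg at hco
      apply hγne
      funext i
      have h := hco i
      have hz : ((μ i : ℕ) : ℝ) = 0 := by
        have : (μ i : ℕ) = 0 := by omega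
        rw [this]; norm_num
      show 2 * π * ((μ i : ℕ) : ℝ) / (lam : ℝ) = 0
      rw [hz]
      ring
    obtain ⟨i0, hi0⟩ := hex
    rw [tauTW]
    have hexp : ∀ l : ℕ,
        Complex.exp (Complex.I * ((zdot (ν l)
          (fun i => 2 * π * ((μ i : ℕ) : ℝ) / (lam : ℝ)) : ℝ) : ℂ))
        = chi lam (∑ i, ν l i * ((μ i : ℕ) : ℤ)) := by
      intro l
      rw [chi]
      congr 1
      rw [zdot]
      push_cast
      have hlamC : (lam : ℂ) ≠ 0 := Nat.cast_ne_zero.2 (by omega)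
      have step : ∀ i : Fin n, Complex.I * ((ν l i : ℂ) * (2 * (π:ℂ) * ((μ i : ℕ) : ℂ) / (lam : ℂ)))
          = 2 * (π:ℂ) * Complex.I * ((ν l i : ℂ) * ((μ i : ℕ) : ℂ)) / (lam : ℂ) := by
        intro i; field_simp
      rw [Finset.mul_sum, Finset.mul_sum, Finset.sum_div]
      exact Finset.sum_congr rfl (fun i _ => step i)
    have hp1 : ∀ l < N,
        p l (fun i => (lam : ℝ) * (2 * π * ((μ i : ℕ) : ℝ) / (lam : ℝ))) = 1 := by
      intro l hl
      have harg : (fun i => (lam : ℝ) * (2 * π * ((μ i : ℕ) : ℝ) / (lam : ℝ)))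
          = (fun i => (0 : Fin n → ℝ) i + 2 * π * ((((μ i : ℕ) : ℤ) : ℝ))) := by
        funext i
        push_cast
        field_simp
        simp
      rw [harg, hper l hl 0 (fun i => ((μ i : ℕ) : ℤ)), hp0 l hl]
    have hsum1 : (∑ l ∈ Finset.range N,
        p l (fun i => (lam : ℝ) * (2 * π * ((μ i : ℕ) : ℝ) / (lam : ℝ))) *
          Complex.exp (Complex.I * ((zdot (ν l)
            (fun i => 2 * π * ((μ i : ℕ) : ℝ) / (lam : ℝ)) : ℝ) : ℂ)))
        = ∑ l ∈ Finset.range N, chi lam (∑ i, ν l i * ((μ i : ℕ) : ℤ)) := by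
      refine Finset.sum_congr rfl (fun l hl => ?_)
      rw [hp1 l (Finset.mem_range.1 hl), one_mul, hexp l]
    have hsum2 : (∑ l ∈ Finset.Ico N (lam ^ n),
        Complex.exp (Complex.I * ((zdot (ν l)
          (fun i => 2 * π * ((μ i : ℕ) : ℝ) / (lam : ℝ)) : ℝ) : ℂ)))
        = ∑ l ∈ Finset.Ico N (lam ^ n), chi lam (∑ i, ν l i * ((μ i : ℕ) : ℤ)) :=
      Finset.sum_congr rfl (fun l _ => hexp l)
    rw [hsum1, hsum2]
    have hcomb : (∑ l ∈ Finset.range N, chi lam (∑ i, ν l i * ((μ i : ℕ) : ℤ)))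
        + ∑ l ∈ Finset.Ico N (lam ^ n), chi lam (∑ i, ν l i * ((μ i : ℕ) : ℤ))
        = ∑ l ∈ Finset.range (lam ^ n), chi lam (∑ i, ν l i * ((μ i : ℕ) : ℤ)) := by
      rw [Finset.range_eq_Ico, Finset.range_eq_Ico]
      exact Finset.sum_Ico_consecutive _ (Nat.zero_le N) hNlam
    rw [hcomb, sum_reindex n lam ν hν μ, sum_G_eq_zero n lam hlam μ i0 hi0, mul_zero]
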